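/- arXiv:2502.12815 — 2 statements merged into one kernel-verified Lean document; each statement's English description precedes it below -/
import Mathlib

section
/- The five dihedral coordinates u_{13}, u_{24}, ..., defined as the cross ratios [i,i+1|j+1,j] formed from the Plücker coordinates of the matrix with rows (1,1,1,1,0), (0,1,1+x,1+x+y,1), satisfy the binary geometry relation u_{13} + u_{24} u_{25} = 1. -/
/-- The 2×5 matrix with rows `(1,1,1,1,0)` and `(0,1,1+x,1+x+y,1)`. -/
def Mmat (x y : ℝ) : Matrix (Fin 2) (Fin 5) ℝ :=
  !![1, 1, 1, 1, 0; 0, 1, 1 + x, 1 + x + y, 1]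

/-- The 2×2 minor (Plücker coordinate) of `Mmat x y` on columns `i, j`. -/
def pmin (x y : ℝ) (i j : Fin 5) : ℝ :=
  Mmat x y 0 i * Mmat x y 1 j - Mmat x y 0 j * Mmat x y 1 i

/-- The dihedral coordinate `u_{ij} = [i,i+1 | j+1,j]`, a cross ratio of Plücker
coordinates, with indices taken cyclically modulo 5 (here 0-indexed: particle `i`
corresponds to the `Fin 5` value `i - 1`). -/
noncomputable def u (x y : ℝ) (i j : Fin 5) : ℝ :=
  (pmin x y i (j + 1) * pmin x y (i + 1) j) / (pmin x y i j * pmin x y (i + 1) (j + 1))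

/-- The binary geometry relation `u₁₃ + u₂₄ u₂₅ = 1` for the dihedral coordinates of
the parametrized point of `M₀,₅`. -/
theorem binary_relation (x y : ℝ) (hx : x ≠ 0) (hy : y ≠ 0)
    (h1x : 1 + x ≠ 0) (hxy : x + y ≠ 0) (h1xy : 1 + x + y ≠ 0) :
    u x y 0 2 + u x y 1 3 * u x y 1 4 = 1 := by
  simp only [u, pmin, Mmat, show (4:Fin 5)+1 = 0 from rfl, show (2:Fin 5)+1 = 3 from rfl,
    show (0:Fin 5)+1 = 1 from rfl, show (1:Fin 5)+1 = 2 from rfl, show (3:Fin 5)+1 = 4 from rfl]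
  norm_num [Matrix.cons_val_zero, Matrix.cons_val_one, Matrix.head_cons, Matrix.cons_val_two,
    Matrix.cons_val_three, Matrix.cons_val_four, Matrix.tail_cons]
  have h : x + x*y + x^2 + y ≠ 0 := fun hc => mul_ne_zero h1x hxy (by linear_combination hc)
  rw [show (1+x+y-1 : ℝ) = x+y by ring, show (-x + -1 : ℝ) = -(1+x) by ring]
  field_simp
  ring
end

section
/- With the dihedral coordinates u_{13}, u_{14}, u_{24}, u_{25}, u_{35} defined as cross ratios of the Plücker coordinates of the parametrized 2×5 matrix, all five relations hold: u_{13} + u_{24}u_{25} = 1, u_{24} + u_{13}u_{35} = 1, u_{35} + u_{14}u_{24} = 1, u_{14} + u_{25}u_{35} = 1, u_{25} + u_{13}u_{14} = 1. -/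
/-! The binary relations of the five dihedral coordinates of a 2×5 matrix are all the three-term
Plücker relation `p_ac p_bd = p_ab p_cd + p_ad p_bc`: in `u_{i,i+2} + u_{i+1,i+3} u_{i+1,i+4}`
the product telescopes to `p_ab p_cd / (p_ac p_bd)` (columns `a, …, e = i, …, i+4`), so only the
"diagonal" minors `p_{k,k+2}` have to be nonzero. -/

namespace TwoByN

variable {ι K : Type*}

section CommRing

variable {R : Type*} [CommRing R]

def plucker (M : Matrix (Fin 2) ι R) (a b : ι) : R :=
  M 0 a * M 1 b - M 0 b * M 1 a

theorem plucker_swap (M : Matrix (Fin 2) ι R) (a b : ι) : plucker M b a = -plucker M a b := by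
  unfold plucker; ring

theorem plucker_mul_plucker (M : Matrix (Fin 2) ι R) (a b c d : ι) :
    plucker M a c * plucker M b d = plucker M a b * plucker M c d + plucker M a d * plucker M b c := by
  unfold plucker; ring

end CommRing

variable [Field K]

/-- The cross ratio `[ab|cd] = p_ac p_bd / (p_ad p_bc)`. -/
def crossRatio (M : Matrix (Fin 2) ι K) (a b c d : ι) : K :=
  plucker M a c * plucker M b d / (plucker M a d * plucker M b c)

theorem crossRatio_reverse (M : Matrix (Fin 2) ι K) (a b c d : ι) :
    crossRatio M d c b a = crossRatio M a b c d := by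
  simp only [crossRatio, plucker_swap M _ a, plucker_swap M _ b]
  ring

theorem crossRatio_add_crossRatio_mul_crossRatio (M : Matrix (Fin 2) ι K) {a b c d e : ι}
    (hac : plucker M a c ≠ 0) (hbd : plucker M b d ≠ 0) (hbe : plucker M b e ≠ 0)
    (hce : plucker M c e ≠ 0) :
    crossRatio M a b d c + crossRatio M b c e d * crossRatio M b c a e = 1 := by
  have hca : plucker M c a ≠ 0 := by rwa [plucker_swap, neg_ne_zero]
  have hprod : crossRatio M b c e d * crossRatio M b c a e
      = plucker M a b * plucker M c d / (plucker M a c * plucker M b d) := by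
    simp only [crossRatio]
    rw [plucker_swap M b a, plucker_swap M c a]
    field_simp
  rw [hprod, crossRatio, ← add_div, div_eq_one_iff_eq (mul_ne_zero hac hbd),
    plucker_mul_plucker M a b c d]
  ring

section Dihedral

variable {n : ℕ} [NeZero n]

def dihedralCoord (M : Matrix (Fin 2) (Fin n) K) (i j : Fin n) : K :=
  crossRatio M i (i + 1) (j + 1) j

theorem dihedralCoord_comm (M : Matrix (Fin 2) (Fin n) K) (i j : Fin n) :
    dihedralCoord M i j = dihedralCoord M j i :=
  (crossRatio_reverse M _ _ _ _).symm

end Dihedral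

theorem dihedralCoord_add_mul_eq_one (M : Matrix (Fin 2) (Fin 5) K)
    (hM : ∀ k, plucker M k (k + 2) ≠ 0) (i : Fin 5) :
    dihedralCoord M i (i + 2) + dihedralCoord M (i + 1) (i + 3) * dihedralCoord M (i + 1) (i + 4)
      = 1 := by
  have hbd : plucker M (i + 1) (i + 3) ≠ 0 := by
    simpa only [add_assoc, Fin.reduceAdd] using hM (i + 1)
  have hce : plucker M (i + 2) (i + 4) ≠ 0 := by
    simpa only [add_assoc, Fin.reduceAdd] using hM (i + 2)
  have hbe : plucker M (i + 1) (i + 4) ≠ 0 := by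
    simpa only [plucker_swap M (i + 4), neg_ne_zero, add_assoc, Fin.reduceAdd] using hM (i + 4)
  simp only [dihedralCoord, add_assoc, Fin.reduceAdd, add_zero]
  exact crossRatio_add_crossRatio_mul_crossRatio M (hM i) hbd hbe hce

theorem dihedralCoord_binary_relations (M : Matrix (Fin 2) (Fin 5) K)
    (hM : ∀ k, plucker M k (k + 2) ≠ 0) :
    dihedralCoord M 0 2 + dihedralCoord M 1 3 * dihedralCoord M 1 4 = 1 ∧
    dihedralCoord M 1 3 + dihedralCoord M 0 2 * dihedralCoord M 2 4 = 1 ∧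
    dihedralCoord M 2 4 + dihedralCoord M 0 3 * dihedralCoord M 1 3 = 1 ∧
    dihedralCoord M 0 3 + dihedralCoord M 1 4 * dihedralCoord M 2 4 = 1 ∧
    dihedralCoord M 1 4 + dihedralCoord M 0 2 * dihedralCoord M 0 3 = 1 := by
  have rel := dihedralCoord_add_mul_eq_one M hM
  have r0 := rel 0; have r1 := rel 1; have r2 := rel 2; have r3 := rel 3; have r4 := rel 4
  simp only [Fin.reduceAdd] at r0 r1 r2 r3 r4
  rw [dihedralCoord_comm M 2 0] at r1
  rw [dihedralCoord_comm M 3 0, dihedralCoord_comm M 3 1] at r2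
  rw [dihedralCoord_comm M 3 0, dihedralCoord_comm M 4 1, dihedralCoord_comm M 4 2] at r3
  rw [dihedralCoord_comm M 4 1] at r4
  exact ⟨r0, by linear_combination r1, by linear_combination r2, by linear_combination r3, r4⟩

end TwoByN

open TwoByN

/-- Indices are 0-based: `u₁₃ = u x y 0 2`, `u₂₄ = u x y 1 3`, `u₃₅ = u x y 2 4`,
`u₁₄ = u x y 0 3`, `u₂₅ = u x y 1 4`. -/
theorem binary_relations_general (x y : ℝ)
    (h1x : 1 + x ≠ 0) (hxy : x + y ≠ 0) (h1xy : 1 + x + y ≠ 0) :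
    u x y 0 2 + u x y 1 3 * u x y 1 4 = 1 ∧
    u x y 1 3 + u x y 0 2 * u x y 2 4 = 1 ∧
    u x y 2 4 + u x y 0 3 * u x y 1 3 = 1 ∧
    u x y 0 3 + u x y 1 4 * u x y 2 4 = 1 ∧
    u x y 1 4 + u x y 0 2 * u x y 0 3 = 1 := by
  have hM : ∀ k, plucker (Mmat x y) k (k + 2) ≠ 0 := by
    intro k
    fin_cases k <;> simp [plucker, Mmat]
    · exact h1x
    · contrapose! hxy; linarith
    · contrapose! h1xy; linarith
  exact dihedralCoord_binary_relations (Mmat x y) hM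

/-- All five binary geometry relations for the dihedral coordinates
`u₁₃, u₂₄, u₃₅, u₁₄, u₂₅` (here `u₁₃ = u x y 0 2`, `u₂₄ = u x y 1 3`,
`u₃₅ = u x y 2 4`, `u₁₄ = u x y 0 3`, `u₂₅ = u x y 1 4`). -/
theorem binary_relations (x y : ℝ) (hx : x ≠ 0) (hy : y ≠ 0)
    (h1x : 1 + x ≠ 0) (hxy : x + y ≠ 0) (h1xy : 1 + x + y ≠ 0) :
    u x y 0 2 + u x y 1 3 * u x y 1 4 = 1 ∧
    u x y 1 3 + u x y 0 2 * u x y 2 4 = 1 ∧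
    u x y 2 4 + u x y 0 3 * u x y 1 3 = 1 ∧
    u x y 0 3 + u x y 1 4 * u x y 2 4 = 1 ∧
    u x y 1 4 + u x y 0 2 * u x y 0 3 = 1 :=
  binary_relations_general x y h1x hxy h1xy
end
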